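/- arXiv:1909.05377 — 2 statements merged into one kernel-verified Lean document; each statement's English description precedes it below -/
import Mathlib

section
/- Let C : ℝⁿ × ℝ → ℝⁿ be continuously differentiable and let κ > 0. Suppose p : ℝ → ℝⁿ is differentiable and satisfies the closed-loop equation (I − D_p C(p(t),t)) ṗ(t) = κ (C(p(t),t) − p(t)) + ∂C/∂t (p(t),t) for all t. Then the tracking error e(t) = p(t) − C(p(t),t) satisfies ė(t) = −κ e(t) for all t. -/
section GraphChainRule

variable {𝕜 E F : Type*} [NontriviallyNormedField 𝕜] [NormedAddCommGroup E] [NormedSpace 𝕜 E]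
  [NormedAddCommGroup F] [NormedSpace 𝕜 F]

theorem DifferentiableAt.hasDerivAt_comp_graph {C : E × 𝕜 → F} {p : 𝕜 → E} {t : 𝕜}
    (hC : DifferentiableAt 𝕜 C (p t, t)) (hp : DifferentiableAt 𝕜 p t) :
    HasDerivAt (fun τ => C (p τ, τ))
      (fderiv 𝕜 (fun x => C (x, t)) (p t) (deriv p t) + deriv (fun s => C (p t, s)) t) t := by
  set L := fderiv 𝕜 C (p t, t)
  have hL : HasFDerivAt C L (p t, t) := hC.hasFDerivAt
  have hspace : fderiv 𝕜 (fun x => C (x, t)) (p t) = L.comp (ContinuousLinearMap.inl 𝕜 E 𝕜) :=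
    (hL.comp (p t) (hasFDerivAt_prodMk_left (p t) t)).fderiv
  have htime : deriv (fun s => C (p t, s)) t = L (0, 1) :=
    (hL.comp_hasDerivAt t ((hasDerivAt_const t (p t)).prodMk (hasDerivAt_id t))).deriv
  have htotal : HasDerivAt (fun τ => C (p τ, τ)) (L (deriv p t, 1)) t :=
    hL.comp_hasDerivAt (f := fun τ => (p τ, τ)) t (hp.hasDerivAt.prodMk (hasDerivAt_id t))
  rwa [hspace, htime, ContinuousLinearMap.comp_apply, ContinuousLinearMap.inl_apply, ← map_add,
    Prod.mk_add_mk, add_zero, zero_add]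

end GraphChainRule

theorem tvdc_error_dynamics_general {n : ℕ}
    (C : EuclideanSpace ℝ (Fin n) × ℝ → EuclideanSpace ℝ (Fin n))
    (hC : ContDiff ℝ 1 C) (κ : ℝ)
    (p : ℝ → EuclideanSpace ℝ (Fin n)) (hp : Differentiable ℝ p)
    (hclosed : ∀ t : ℝ,
      deriv p t - fderiv ℝ (fun x => C (x, t)) (p t) (deriv p t)
        = κ • (C (p t, t) - p t) + deriv (fun s => C (p t, s)) t) :
    ∀ t : ℝ, deriv (fun τ => p τ - C (p τ, τ)) t = -κ • (p t - C (p t, t)) := by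
  intro t
  have hCt : DifferentiableAt ℝ C (p t, t) := hC.differentiable one_ne_zero _
  have herror : HasDerivAt (fun τ => p τ - C (p τ, τ)) _ t :=
    (hp t).hasDerivAt.sub (hCt.hasDerivAt_comp_graph (hp t))
  -- `ė = (ṗ - D_pC ṗ) - ∂ₜC`, and the closed-loop equation turns the bracket into `κ (C - p) + ∂ₜC`.
  rw [herror.deriv, ← sub_sub, hclosed t, add_sub_cancel_right, neg_smul, ← smul_neg, neg_sub]

/-- Error dynamics of the TVD-C control law. If `C : ℝⁿ × ℝ → ℝⁿ` is
continuously differentiable, `κ > 0`, and the differentiable trajectory `p`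
satisfies the closed-loop equation
`(I − D_p C(p(t),t)) ṗ(t) = κ (C(p(t),t) − p(t)) + ∂C/∂t (p(t),t)` for all `t`,
then the tracking error `e(t) = p(t) − C(p(t),t)` satisfies `ė(t) = −κ e(t)`. -/
theorem tvdc_error_dynamics {n : ℕ}
    (C : EuclideanSpace ℝ (Fin n) × ℝ → EuclideanSpace ℝ (Fin n))
    (hC : ContDiff ℝ 1 C) (κ : ℝ) (hκ : 0 < κ)
    (p : ℝ → EuclideanSpace ℝ (Fin n)) (hp : Differentiable ℝ p)
    (hclosed : ∀ t : ℝ,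
      deriv p t - fderiv ℝ (fun x => C (x, t)) (p t) (deriv p t)
        = κ • (C (p t, t) - p t) + deriv (fun s => C (p t, s)) t) :
    ∀ t : ℝ, deriv (fun τ => p τ - C (p τ, τ)) t = -κ • (p t - C (p t, t)) :=
  tvdc_error_dynamics_general C hC κ p hp hclosed
end

section
/- Let C : ℝⁿ × ℝ → ℝⁿ be continuously differentiable, κ > 0, and t₀ ∈ ℝ. Suppose p : ℝ → ℝⁿ is differentiable and satisfies (I − D_p C(p(t),t)) ṗ(t) = κ (C(p(t),t) − p(t)) + ∂C/∂t (p(t),t) for all t. Then for all t ≥ t₀, ‖p(t) − C(p(t),t)‖ = exp(−κ (t − t₀)) · ‖p(t₀) − C(p(t₀),t₀)‖. -/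
/-!
Along the closed loop the error `e(t) = p(t) − C(p(t), t)` satisfies `ė = ṗ − D_p C ṗ − ∂C/∂t`,
which the control law turns into `ė = −κ e`. Hence `e(t) = exp(−κ (t − t₀)) e(t₀)`, and taking
norms gives the claimed identity.
-/

open ContinuousLinearMap in
theorem DifferentiableAt.hasDerivAt_comp_prodMk_self {E F : Type*}
    [NormedAddCommGroup E] [NormedSpace ℝ E] [NormedAddCommGroup F] [NormedSpace ℝ F]
    {f : E × ℝ → F} {γ : ℝ → E} {γ' : E} {s : ℝ}
    (hf : DifferentiableAt ℝ f (γ s, s)) (hγ : HasDerivAt γ γ' s) :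
    HasDerivAt (fun u => f (γ u, u))
      (fderiv ℝ (fun x => f (x, s)) (γ s) γ' + deriv (fun u => f (γ s, u)) s) s := by
  have hL := hf.hasFDerivAt
  have hx : HasFDerivAt (fun x => f (x, s)) ((fderiv ℝ f (γ s, s)).comp (inl ℝ E ℝ)) (γ s) :=
    hL.comp (γ s) (hasFDerivAt_prodMk_left (γ s) s)
  have ht : HasDerivAt (fun u => f (γ s, u)) (fderiv ℝ f (γ s, s) (0, 1)) s :=
    hL.comp_hasDerivAt s ((hasDerivAt_const s (γ s)).prodMk (hasDerivAt_id s))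
  rw [hx.fderiv, ht.deriv]
  refine (hL.comp_hasDerivAt (f := fun u => (γ u, u)) s
    (hγ.prodMk (hasDerivAt_id s))).congr_deriv ?_
  simp [← map_add]

theorem eq_exp_smul_of_hasDerivAt_smul {E : Type*} [NormedAddCommGroup E] [NormedSpace ℝ E]
    {e : ℝ → E} {a : ℝ} (he : ∀ s, HasDerivAt e (a • e s) s) (t₀ t : ℝ) :
    e t = Real.exp (a * (t - t₀)) • e t₀ := by
  set g : ℝ → E := fun s => Real.exp (-a * (s - t₀)) • e s
  have hg : ∀ s, HasDerivAt g 0 s := fun s => by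
    have hexp : HasDerivAt (fun u => Real.exp (-a * (u - t₀)))
        (-a * Real.exp (-a * (s - t₀))) s := by
      simpa [mul_comm] using (((hasDerivAt_id s).sub_const t₀).const_mul (-a)).exp
    refine (hexp.smul (he s)).congr_deriv ?_
    rw [smul_smul, ← add_smul]; ring_nf; simp
  have hgt : g t = e t₀ := by
    simpa [g] using is_const_of_deriv_eq_zero (fun s => (hg s).differentiableAt)
      (fun s => (hg s).deriv) t t₀
  rw [← hgt, smul_smul, ← Real.exp_add]; ring_nf; simp

theorem tvdc_exponential_convergence_general {n : ℕ}
    (C : EuclideanSpace ℝ (Fin n) × ℝ → EuclideanSpace ℝ (Fin n))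
    (hC : ContDiff ℝ 1 C) (κ : ℝ) (t₀ : ℝ)
    (p : ℝ → EuclideanSpace ℝ (Fin n)) (hp : Differentiable ℝ p)
    (hclosed : ∀ t : ℝ,
      deriv p t - fderiv ℝ (fun x => C (x, t)) (p t) (deriv p t)
        = κ • (C (p t, t) - p t) + deriv (fun s => C (p t, s)) t) :
    ∀ t : ℝ, t₀ ≤ t →
      ‖p t - C (p t, t)‖ = Real.exp (-κ * (t - t₀)) * ‖p t₀ - C (p t₀, t₀)‖ := by
  have hCd : Differentiable ℝ C := hC.differentiable one_ne_zero
  have herror : ∀ s, HasDerivAt (fun u => p u - C (p u, u)) (-κ • (p s - C (p s, s))) s := by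
    intro s
    refine ((hp s).hasDerivAt.sub
      ((hCd _).hasDerivAt_comp_prodMk_self (hp s).hasDerivAt)).congr_deriv ?_
    rw [← sub_sub, hclosed s, neg_smul, ← smul_neg, neg_sub]
    abel
  intro t _
  rw [eq_exp_smul_of_hasDerivAt_smul herror t₀ t, norm_smul,
    Real.norm_of_nonneg (Real.exp_pos _).le]

/-- Corollary 1 of the paper: Under the TVD-C control law, the
closed-loop trajectory converges exponentially to a CVT: for all `t ≥ t₀`,
`‖p(t) − C(p(t),t)‖ = exp(−κ (t − t₀)) ‖p(t₀) − C(p(t₀),t₀)‖`. -/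
theorem tvdc_exponential_convergence {n : ℕ}
    (C : EuclideanSpace ℝ (Fin n) × ℝ → EuclideanSpace ℝ (Fin n))
    (hC : ContDiff ℝ 1 C) (κ : ℝ) (hκ : 0 < κ) (t₀ : ℝ)
    (p : ℝ → EuclideanSpace ℝ (Fin n)) (hp : Differentiable ℝ p)
    (hclosed : ∀ t : ℝ,
      deriv p t - fderiv ℝ (fun x => C (x, t)) (p t) (deriv p t)
        = κ • (C (p t, t) - p t) + deriv (fun s => C (p t, s)) t) :
    ∀ t : ℝ, t₀ ≤ t →
      ‖p t - C (p t, t)‖ = Real.exp (-κ * (t - t₀)) * ‖p t₀ - C (p t₀, t₀)‖ :=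
  tvdc_exponential_convergence_general C hC κ t₀ p hp hclosed
end
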